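/- Let H be a complex separable infinite-dimensional Hilbert space, let E ⊆ c₀ be a Banach symmetric sequence space, and let C_E be the associated Banach symmetric ideal. Then for every x ∈ C_E there exists a sequence {x_n} of finite rank operators on H such that x_n → x in the weak topology σ(C_E, C_E^×). -/

import Mathlib

/-! Let `P_n` be the orthogonal projection onto the span of `b 0, …, b (n-1)`. The operators
`P_n x` have finite rank, and since `‖P_n‖ ≤ 1` their singular values are dominated by those of
`x`, so they lie in `C_E`. For `y ∈ C_E^×`, `tr (P_n x y)` is the `n`-th partial sum of the
diagonal series `∑ ⟪b i, x y (b i)⟫`, so everything reduces to the summability of the diagonal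
of the trace class operator `z = x y`. For that, approximate `z` in norm by operators `G m` of
rank `≤ 2 ^ m` with `‖z - G m‖ ≲ s_{2^m}(z)`: an operator `F` of rank `r` has diagonal `ℓ¹`-sum
at most `r ‖F‖`, so telescoping bounds the diagonal `ℓ¹`-sum of `z` by `∑ 2 ^ m s_{2^m}(z)`, which
is finite by Cauchy condensation. -/

open scoped InnerProductSpace
open Filter Topology

noncomputable section

/-- The non-increasing rearrangement `x*` of a bounded real sequence:
`x*_n = inf_{|F| ≤ n} sup_{k ∉ F} |x k|`. -/
noncomputable def decRearrange (x : ℕ → ℝ) (n : ℕ) : ℝ :=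
  sInf {c : ℝ | ∃ F : Finset ℕ, F.card ≤ n ∧ ∀ k ∉ F, |x k| ≤ c}

/-- A Banach symmetric sequence space: a nonzero linear subspace of `ℓ∞` (real bounded
sequences) equipped with a complete norm such that `x* ≤ y*` pointwise and `y ∈ E` imply
`x ∈ E` with `‖x‖_E ≤ ‖y‖_E`. -/
structure BanachSymmSeqSpace where
  carrier : Set (ℕ → ℝ)
  bdd : ∀ x ∈ carrier, ∃ C : ℝ, ∀ n, |x n| ≤ C
  zero_mem : (0 : ℕ → ℝ) ∈ carrier
  add_mem : ∀ x ∈ carrier, ∀ y ∈ carrier, x + y ∈ carrier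
  smul_mem : ∀ (c : ℝ), ∀ x ∈ carrier, c • x ∈ carrier
  nontrivial : ∃ x ∈ carrier, x ≠ 0
  nrm : (ℕ → ℝ) → ℝ
  nrm_zero : nrm 0 = 0
  nrm_pos : ∀ x ∈ carrier, x ≠ 0 → 0 < nrm x
  nrm_smul : ∀ (c : ℝ), ∀ x ∈ carrier, nrm (c • x) = |c| * nrm x
  nrm_triangle : ∀ x ∈ carrier, ∀ y ∈ carrier, nrm (x + y) ≤ nrm x + nrm y
  complete : ∀ u : ℕ → ℕ → ℝ, (∀ n, u n ∈ carrier) →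
    (∀ ε : ℝ, 0 < ε → ∃ N, ∀ m ≥ N, ∀ k ≥ N, nrm (u m - u k) < ε) →
    ∃ x ∈ carrier, ∀ ε : ℝ, 0 < ε → ∃ N, ∀ m ≥ N, nrm (u m - x) < ε
  symmetric : ∀ x : ℕ → ℝ, ∀ y ∈ carrier, (∃ C : ℝ, ∀ n, |x n| ≤ C) →
    (∀ n, decRearrange x n ≤ decRearrange y n) → x ∈ carrier ∧ nrm x ≤ nrm y

/-- `E ⊆ c₀`: every element of `E` tends to zero. -/
def BanachSymmSeqSpace.SubsetC0 (S : BanachSymmSeqSpace) : Prop :=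
  ∀ x ∈ S.carrier, Filter.Tendsto x Filter.atTop (nhds 0)

/-- The Fatou property of a Banach symmetric sequence space. -/
def BanachSymmSeqSpace.Fatou (S : BanachSymmSeqSpace) : Prop :=
  ∀ a : ℕ → ℕ → ℝ, (∀ k, a k ∈ S.carrier) → (∀ k n, 0 ≤ a k n) →
    (∀ k n, a k n ≤ a (k + 1) n) → (∃ C : ℝ, ∀ k, S.nrm (a k) ≤ C) →
    ∃ b ∈ S.carrier, (∀ n, IsLUB {r : ℝ | ∃ k, r = a k n} (b n)) ∧
      IsLUB {r : ℝ | ∃ k, r = S.nrm (a k)} (S.nrm b)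

/-- `E = ℓ₂` as a set of sequences. -/
def ellTwo : Set (ℕ → ℝ) := {x : ℕ → ℝ | Summable fun n => (x n) ^ 2}

section OperatorIdeal

variable {H : Type*} [NormedAddCommGroup H] [InnerProductSpace ℂ H] [CompleteSpace H]

/-- The `n`-th singular value (approximation number) of an operator:
`s_n(x) = inf { ‖x - F‖ : rank F ≤ n }` (so `s_0(x) = ‖x‖`). For compact operators this is
the `n`-th eigenvalue (in decreasing order) of `(x*x)^{1/2}`. -/
noncomputable def singVal (x : H →L[ℂ] H) (n : ℕ) : ℝ :=
  sInf {c : ℝ | ∃ F : H →L[ℂ] H, FiniteDimensional ℂ (LinearMap.range (F : H →ₗ[ℂ] H)) ∧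
    Module.finrank ℂ (LinearMap.range (F : H →ₗ[ℂ] H)) ≤ n ∧ ‖x - F‖ = c}

/-- The Banach symmetric ideal `C_E` of compact operators whose singular value sequence
belongs to `E`. -/
def CE (S : BanachSymmSeqSpace) : Set (H →L[ℂ] H) :=
  {x | IsCompactOperator (⇑x) ∧ (fun n => singVal x n) ∈ S.carrier}

/-- The norm `‖x‖_{C_E} = ‖{s_n(x)}‖_E` of the Banach symmetric ideal `C_E`. -/
noncomputable def CEnorm (S : BanachSymmSeqSpace) (x : H →L[ℂ] H) : ℝ :=
  S.nrm (fun n => singVal x n)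

/-- A trace class operator: a compact operator with summable singular values. -/
def IsTraceClass (z : H →L[ℂ] H) : Prop :=
  IsCompactOperator (⇑z) ∧ Summable fun n => singVal z n

/-- The Köthe dual `C_E^× = { y ∈ B(H) : x y is trace class for every x ∈ C_E }`. -/
def KDual (S : BanachSymmSeqSpace) : Set (H →L[ℂ] H) :=
  {y : H →L[ℂ] H | ∀ x ∈ CE (H := H) S, IsTraceClass (x * y)}

/-- The trace of an operator computed with respect to a Hilbert basis `b`:
`tr z = Σ_i ⟪b i, z (b i)⟫` (basis independent for trace class operators). -/
noncomputable def traceB (b : HilbertBasis ℕ ℂ H) (z : H →L[ℂ] H) : ℂ :=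
  ∑' i, ⟪b i, z (b i)⟫_ℂ

/-- The weak topology `σ(C_E, C_E^×)` on `C_E`, generated by the functionals
`x ↦ tr (x y)`, `y ∈ C_E^×`. -/
noncomputable def sigmaTop (S : BanachSymmSeqSpace) (b : HilbertBasis ℕ ℂ H) :
    TopologicalSpace {x : H →L[ℂ] H // x ∈ CE (H := H) S} :=
  ⨅ y : {y : H →L[ℂ] H // y ∈ KDual (H := H) S},
    TopologicalSpace.induced (fun x => traceB b (x.1 * y.1)) inferInstance

/-- The ball topology `b_{C_E}`: the coarsest topology in which every closed norm ball
of `(C_E, ‖·‖_{C_E})` is closed. -/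
noncomputable def ballTop (S : BanachSymmSeqSpace) :
    TopologicalSpace {x : H →L[ℂ] H // x ∈ CE (H := H) S} :=
  TopologicalSpace.generateFrom
    {s | ∃ (c : {x : H →L[ℂ] H // x ∈ CE (H := H) S}) (ε : ℝ), 0 < ε ∧
      s = {y : {x : H →L[ℂ] H // x ∈ CE (H := H) S} | CEnorm S (y.1 - c.1) ≤ ε}ᶜ}

/-- `W` is a surjective (complex-)linear isometry of the Banach symmetric ideal `C_E`. -/
def SurjLinearIsomOn (S : BanachSymmSeqSpace) (W : (H →L[ℂ] H) → (H →L[ℂ] H)) : Prop :=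
  (∀ x ∈ CE (H := H) S, W x ∈ CE (H := H) S) ∧
  (∀ y ∈ CE (H := H) S, ∃ x ∈ CE (H := H) S, W x = y) ∧
  (∀ x ∈ CE (H := H) S, ∀ y ∈ CE (H := H) S, W (x + y) = W x + W y) ∧
  (∀ (c : ℂ), ∀ x ∈ CE (H := H) S, W (c • x) = c • W x) ∧
  (∀ x ∈ CE (H := H) S, CEnorm S (W x) = CEnorm S x)

end OperatorIdeal

end


open InnerProductSpace (rankOne)
open ContinuousLinearMap (adjoint)

section FiniteRank

variable {𝕜 E : Type*} [NormedField 𝕜] [NormedAddCommGroup E] [NormedSpace 𝕜 E]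

theorem range_toLinearMap_zero : LinearMap.range ((0 : E →L[𝕜] E) : E →ₗ[𝕜] E) = ⊥ := by
  rw [ContinuousLinearMap.toLinearMap_zero, LinearMap.range_zero]

instance finiteDimensional_range_zero :
    FiniteDimensional 𝕜 (LinearMap.range ((0 : E →L[𝕜] E) : E →ₗ[𝕜] E)) := by
  rw [range_toLinearMap_zero]; infer_instance

theorem finrank_range_zero :
    Module.finrank 𝕜 (LinearMap.range ((0 : E →L[𝕜] E) : E →ₗ[𝕜] E)) = 0 := by
  rw [range_toLinearMap_zero, finrank_bot]

theorem range_sub_le_sup (A B : E →L[𝕜] E) :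
    LinearMap.range ((A - B : E →L[𝕜] E) : E →ₗ[𝕜] E) ≤
      LinearMap.range (A : E →ₗ[𝕜] E) ⊔ LinearMap.range (B : E →ₗ[𝕜] E) := by
  rw [ContinuousLinearMap.toLinearMap_sub, sub_eq_add_neg, ← LinearMap.range_neg (B : E →ₗ[𝕜] E)]
  exact LinearMap.range_add_le _ _

variable {A B : E →L[𝕜] E} [FiniteDimensional 𝕜 (LinearMap.range (A : E →ₗ[𝕜] E))]
  [FiniteDimensional 𝕜 (LinearMap.range (B : E →ₗ[𝕜] E))]

instance finiteDimensional_range_sub :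
    FiniteDimensional 𝕜 (LinearMap.range ((A - B : E →L[𝕜] E) : E →ₗ[𝕜] E)) :=
  Submodule.finiteDimensional_of_le (range_sub_le_sup A B)

theorem finrank_range_sub_le :
    Module.finrank 𝕜 (LinearMap.range ((A - B : E →L[𝕜] E) : E →ₗ[𝕜] E)) ≤
      Module.finrank 𝕜 (LinearMap.range (A : E →ₗ[𝕜] E)) +
        Module.finrank 𝕜 (LinearMap.range (B : E →ₗ[𝕜] E)) :=
  (Submodule.finrank_mono (range_sub_le_sup A B)).trans
    (Submodule.finrank_add_le_finrank_add_finrank _ _)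

end FiniteRank

section SingularValues

variable {H : Type*} [NormedAddCommGroup H] [InnerProductSpace ℂ H]

theorem singVal_le_norm_sub {z F : H →L[ℂ] H} {n : ℕ}
    [FiniteDimensional ℂ (LinearMap.range (F : H →ₗ[ℂ] H))]
    (hF : Module.finrank ℂ (LinearMap.range (F : H →ₗ[ℂ] H)) ≤ n) :
    singVal z n ≤ ‖z - F‖ :=
  csInf_le ⟨0, by rintro c ⟨G, -, -, rfl⟩; positivity⟩ ⟨F, inferInstance, hF, rfl⟩

theorem singVal_nonneg (z : H →L[ℂ] H) (n : ℕ) : 0 ≤ singVal z n :=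
  Real.sInf_nonneg (by rintro c ⟨F, -, -, rfl⟩; positivity)

theorem singVal_le_norm (z : H →L[ℂ] H) (n : ℕ) : singVal z n ≤ ‖z‖ := by
  simpa using singVal_le_norm_sub (z := z) (F := 0) (finrank_range_zero.trans_le n.zero_le)

theorem exists_finrank_le_norm_sub_lt (z : H →L[ℂ] H) (n : ℕ) {δ : ℝ} (hδ : 0 < δ) :
    ∃ F : H →L[ℂ] H, FiniteDimensional ℂ (LinearMap.range (F : H →ₗ[ℂ] H)) ∧
      Module.finrank ℂ (LinearMap.range (F : H →ₗ[ℂ] H)) ≤ n ∧ ‖z - F‖ < singVal z n + δ := by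
  have hne : {c : ℝ | ∃ F : H →L[ℂ] H, FiniteDimensional ℂ (LinearMap.range (F : H →ₗ[ℂ] H)) ∧
      Module.finrank ℂ (LinearMap.range (F : H →ₗ[ℂ] H)) ≤ n ∧ ‖z - F‖ = c}.Nonempty :=
    ⟨‖z‖, 0, inferInstance, finrank_range_zero.trans_le n.zero_le, by rw [sub_zero]⟩
  obtain ⟨_, ⟨F, hFd, hFn, rfl⟩, hlt⟩ := exists_lt_of_csInf_lt hne (lt_add_of_pos_right _ hδ)
  exact ⟨F, hFd, hFn, hlt⟩

theorem singVal_antitone (z : H →L[ℂ] H) : Antitone (singVal z) := by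
  intro m n hmn
  refine le_of_forall_pos_lt_add fun δ hδ => ?_
  obtain ⟨F, hFd, hFm, hlt⟩ := exists_finrank_le_norm_sub_lt z m hδ
  exact (singVal_le_norm_sub (hFm.trans hmn)).trans_lt hlt

theorem singVal_comp_le {P : H →L[ℂ] H} (hP : ‖P‖ ≤ 1) (z : H →L[ℂ] H) (n : ℕ) :
    singVal (P ∘L z) n ≤ singVal z n := by
  refine le_of_forall_pos_lt_add fun δ hδ => ?_
  obtain ⟨F, hFd, hFn, hlt⟩ := exists_finrank_le_norm_sub_lt z n hδ
  have hrange : LinearMap.range ((P ∘L F : H →L[ℂ] H) : H →ₗ[ℂ] H) =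
      (LinearMap.range (F : H →ₗ[ℂ] H)).map (P : H →ₗ[ℂ] H) := by
    rw [ContinuousLinearMap.toLinearMap_comp, LinearMap.range_comp]
  have : FiniteDimensional ℂ (LinearMap.range ((P ∘L F : H →L[ℂ] H) : H →ₗ[ℂ] H)) := by
    rw [hrange]; infer_instance
  have hPF : Module.finrank ℂ (LinearMap.range ((P ∘L F : H →L[ℂ] H) : H →ₗ[ℂ] H)) ≤ n := by
    rw [hrange]; exact (Submodule.finrank_map_le _ _).trans hFn
  calc singVal (P ∘L z) n ≤ ‖P ∘L z - P ∘L F‖ := singVal_le_norm_sub hPF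
    _ = ‖P ∘L (z - F)‖ := by rw [ContinuousLinearMap.comp_sub]
    _ ≤ ‖P‖ * ‖z - F‖ := ContinuousLinearMap.opNorm_comp_le _ _
    _ ≤ ‖z - F‖ := mul_le_of_le_one_left (norm_nonneg _) hP
    _ < singVal z n + δ := hlt

end SingularValues

theorem decRearrange_le_decRearrange {u v : ℕ → ℝ} (huv : ∀ k, |u k| ≤ |v k|) {C : ℝ}
    (hv : ∀ k, |v k| ≤ C) (n : ℕ) : decRearrange u n ≤ decRearrange v n := by
  refine csInf_le_csInf ⟨0, ?_⟩ ⟨C, ∅, by simp, fun k _ => hv k⟩ ?_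
  · rintro c ⟨F, -, hF⟩
    obtain ⟨k, hk⟩ := Infinite.exists_notMem_finset F
    exact (abs_nonneg _).trans (hF k hk)
  · rintro c ⟨F, hFn, hF⟩
    exact ⟨F, hFn, fun k hk => (huv k).trans (hF k hk)⟩

theorem comp_mem_CE {H : Type*} [NormedAddCommGroup H] [InnerProductSpace ℂ H]
    {S : BanachSymmSeqSpace} {x P : H →L[ℂ] H} (hx : x ∈ CE S) (hP : ‖P‖ ≤ 1) :
    P ∘L x ∈ CE S := by
  have habs : ∀ (z : H →L[ℂ] H) k, |singVal z k| = singVal z k :=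
    fun z k => abs_of_nonneg (singVal_nonneg z k)
  refine ⟨hx.1.clm_comp P, (S.symmetric _ _ hx.2 ⟨‖P ∘L x‖, fun k => ?_⟩ fun k => ?_).1⟩
  · rw [habs]; exact singVal_le_norm _ k
  · refine decRearrange_le_decRearrange (fun m => ?_) (C := ‖x‖) (fun m => ?_) k
    · rw [habs, habs]; exact singVal_comp_le hP x m
    · rw [habs]; exact singVal_le_norm x m

section Diagonal

variable {𝕜 E ι : Type*} [RCLike 𝕜] [NormedAddCommGroup E] [InnerProductSpace 𝕜 E]

def diagSum (v : ι → E) (T : Finset ι) (A : E →L[𝕜] E) : ℝ :=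
  ∑ i ∈ T, ‖⟪v i, A (v i)⟫_𝕜‖

variable {v : ι → E} {T : Finset ι}

theorem continuous_diagSum (v : ι → E) (T : Finset ι) :
    Continuous (diagSum (𝕜 := 𝕜) v T) := by
  unfold diagSum; fun_prop

theorem diagSum_add_le (A B : E →L[𝕜] E) :
    diagSum v T (A + B) ≤ diagSum v T A + diagSum v T B := by
  unfold diagSum
  rw [← Finset.sum_add_distrib]
  gcongr with i
  rw [add_apply, inner_add_right]
  exact norm_add_le _ _

theorem diagSum_sum_le {κ : Type*} (s : Finset κ) (A : κ → E →L[𝕜] E) :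
    diagSum v T (∑ j ∈ s, A j) ≤ ∑ j ∈ s, diagSum v T (A j) := by
  classical
  induction s using Finset.induction_on with
  | empty => simp [diagSum]
  | insert j s hj ih =>
    rw [Finset.sum_insert hj, Finset.sum_insert hj]
    exact (diagSum_add_le _ _).trans (add_le_add le_rfl ih)

theorem Orthonormal.sum_norm_inner_mul_norm_inner_le (hv : Orthonormal 𝕜 v) (x y : E) :
    ∑ i ∈ T, ‖⟪v i, x⟫_𝕜‖ * ‖⟪v i, y⟫_𝕜‖ ≤ ‖x‖ * ‖y‖ :=
  calc ∑ i ∈ T, ‖⟪v i, x⟫_𝕜‖ * ‖⟪v i, y⟫_𝕜‖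
      ≤ √(∑ i ∈ T, ‖⟪v i, x⟫_𝕜‖ ^ 2) * √(∑ i ∈ T, ‖⟪v i, y⟫_𝕜‖ ^ 2) :=
        Real.sum_mul_le_sqrt_mul_sqrt _ _ _
    _ ≤ √(‖x‖ ^ 2) * √(‖y‖ ^ 2) := by
        gcongr
        · exact hv.sum_inner_products_le x
        · exact hv.sum_inner_products_le y
    _ = ‖x‖ * ‖y‖ := by rw [Real.sqrt_sq (norm_nonneg _), Real.sqrt_sq (norm_nonneg _)]

theorem diagSum_rankOne_le (hv : Orthonormal 𝕜 v) (x y : E) :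
    diagSum v T (rankOne 𝕜 x y) ≤ ‖x‖ * ‖y‖ :=
  calc diagSum v T (rankOne 𝕜 x y)
      = ∑ i ∈ T, ‖⟪v i, x⟫_𝕜‖ * ‖⟪v i, y⟫_𝕜‖ := by
        refine Finset.sum_congr rfl fun i _ => ?_
        rw [InnerProductSpace.rankOne_apply, inner_smul_right, norm_mul, norm_inner_symm,
          mul_comm]
    _ ≤ ‖x‖ * ‖y‖ := hv.sum_norm_inner_mul_norm_inner_le x y

variable [CompleteSpace E]

theorem diagSum_le_finrank_mul_norm (hv : Orthonormal 𝕜 v) (G : E →L[𝕜] E)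
    [FiniteDimensional 𝕜 (LinearMap.range (G : E →ₗ[𝕜] E))] :
    diagSum v T G ≤ Module.finrank 𝕜 (LinearMap.range (G : E →ₗ[𝕜] E)) * ‖G‖ := by
  set K := LinearMap.range (G : E →ₗ[𝕜] E)
  let o := stdOrthonormalBasis 𝕜 K
  -- `G` is the projection onto its range composed with `G`
  have hG : G = ∑ j, rankOne 𝕜 (o j : E) (adjoint G (o j)) := by
    ext w
    have hw : K.starProjection (G w) = G w :=
      Submodule.starProjection_eq_self_iff.mpr (LinearMap.mem_range_self _ w)
    rw [← hw, o.starProjection_eq_sum_rankOne]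
    simp [ContinuousLinearMap.adjoint_inner_left]
  have ho (j) : ‖(o j : E)‖ = 1 := o.orthonormal.1 j
  calc diagSum v T G
      ≤ ∑ j, diagSum v T (rankOne 𝕜 (o j : E) (adjoint G (o j))) := by
        conv_lhs => rw [hG]
        exact diagSum_sum_le _ _
    _ ≤ ∑ j, ‖(o j : E)‖ * ‖adjoint G (o j)‖ :=
        Finset.sum_le_sum fun j _ => diagSum_rankOne_le hv _ _
    _ ≤ ∑ _j, ‖G‖ := by
        gcongr with j
        calc ‖(o j : E)‖ * ‖adjoint G (o j)‖ = ‖adjoint G (o j)‖ := by rw [ho, one_mul]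
          _ ≤ ‖adjoint G‖ * ‖(o j : E)‖ := (adjoint G).le_opNorm _
          _ = ‖G‖ := by rw [ho, mul_one, LinearIsometryEquiv.norm_map]
    _ = Module.finrank 𝕜 K * ‖G‖ := by simp

theorem diagSum_le_of_tendsto (hv : Orthonormal 𝕜 v) {z : E →L[𝕜] E} {G : ℕ → E →L[𝕜] E}
    [∀ m, FiniteDimensional 𝕜 (LinearMap.range (G m : E →ₗ[𝕜] E))]
    (hG : Tendsto G atTop (𝓝 z))
    (hs : Summable fun m =>
      Module.finrank 𝕜 (LinearMap.range ((G (m + 1) - G m : E →L[𝕜] E) : E →ₗ[𝕜] E)) *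
        ‖G (m + 1) - G m‖)
    (T : Finset ι) :
    diagSum v T z ≤ Module.finrank 𝕜 (LinearMap.range (G 0 : E →ₗ[𝕜] E)) * ‖G 0‖ +
      ∑' m, Module.finrank 𝕜 (LinearMap.range ((G (m + 1) - G m : E →L[𝕜] E) : E →ₗ[𝕜] E)) *
        ‖G (m + 1) - G m‖ := by
  refine le_of_tendsto ((continuous_diagSum v T).tendsto z |>.comp hG)
    (Eventually.of_forall fun M => ?_)
  have hGM : G M = G 0 + ∑ m ∈ Finset.range M, (G (m + 1) - G m) := by
    rw [Finset.sum_range_sub]; abel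
  calc diagSum v T (G M)
      ≤ diagSum v T (G 0) + ∑ m ∈ Finset.range M, diagSum v T (G (m + 1) - G m) := by
        rw [hGM]
        exact (diagSum_add_le _ _).trans (add_le_add le_rfl (diagSum_sum_le _ _))
    _ ≤ _ := by
        gcongr
        · exact diagSum_le_finrank_mul_norm hv _
        · refine (Finset.sum_le_sum fun m _ => diagSum_le_finrank_mul_norm hv _).trans ?_
          exact hs.sum_le_tsum _ fun m _ => by positivity

end Diagonal

section TraceClass

variable {H : Type*} [NormedAddCommGroup H] [InnerProductSpace ℂ H]

theorem summable_finrank_mul_norm_sub_of_dyadic {z : H →L[ℂ] H} (hs : Summable (singVal z))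
    {G : ℕ → H →L[ℂ] H} [∀ m, FiniteDimensional ℂ (LinearMap.range (G m : H →ₗ[ℂ] H))]
    (hGrk : ∀ m, Module.finrank ℂ (LinearMap.range (G m : H →ₗ[ℂ] H)) ≤ 2 ^ m)
    (hGlt : ∀ m, ‖z - G m‖ < singVal z (2 ^ m) + 4⁻¹ ^ m) :
    Summable fun m =>
      Module.finrank ℂ (LinearMap.range ((G (m + 1) - G m : H →L[ℂ] H) : H →ₗ[ℂ] H)) *
        ‖G (m + 1) - G m‖ := by
  have hcond : Summable fun m : ℕ => (2 : ℝ) ^ m * singVal z (2 ^ m) :=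
    (summable_condensed_iff_of_nonneg (singVal_nonneg z)
      fun _ _ _ hmn => singVal_antitone z hmn).mpr hs
  refine Summable.of_nonneg_of_le (fun m => by positivity) (fun m => ?_)
    ((hcond.mul_left 6).add (summable_geometric_two.mul_left 6))
  have hr : (Module.finrank ℂ (LinearMap.range ((G (m + 1) - G m : H →L[ℂ] H) : H →ₗ[ℂ] H))
      : ℝ) ≤ 3 * 2 ^ m := by
    have := finrank_range_sub_le.trans (add_le_add (hGrk (m + 1)) (hGrk m))
    calc _ ≤ ((2 ^ (m + 1) + 2 ^ m : ℕ) : ℝ) := by exact_mod_cast this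
      _ = 3 * 2 ^ m := by push_cast; ring
  have hn : ‖G (m + 1) - G m‖ ≤ 2 * (singVal z (2 ^ m) + 4⁻¹ ^ m) := by
    have h1 : singVal z (2 ^ (m + 1)) ≤ singVal z (2 ^ m) :=
      singVal_antitone z (Nat.pow_le_pow_right two_pos m.le_succ)
    have h2 : (4⁻¹ : ℝ) ^ (m + 1) ≤ 4⁻¹ ^ m :=
      pow_le_pow_of_le_one (by norm_num) (by norm_num) m.le_succ
    have h3 : ‖G (m + 1) - G m‖ ≤ ‖z - G (m + 1)‖ + ‖z - G m‖ := by
      simpa [norm_sub_rev] using norm_sub_le_norm_sub_add_norm_sub (G (m + 1)) z (G m)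
    linarith [hGlt m, hGlt (m + 1)]
  calc _ ≤ 3 * 2 ^ m * (2 * (singVal z (2 ^ m) + 4⁻¹ ^ m)) :=
        mul_le_mul hr hn (norm_nonneg _) (by positivity)
    _ = 6 * (2 ^ m * singVal z (2 ^ m)) + 6 * (1 / 2) ^ m := by
        rw [show (1 / 2 : ℝ) ^ m = 2 ^ m * 4⁻¹ ^ m by rw [← mul_pow]; norm_num]; ring

theorem summable_inner_apply_of_summable_singVal [CompleteSpace H] {ι : Type*} {v : ι → H}
    (hv : Orthonormal ℂ v) {z : H →L[ℂ] H} (hs : Summable (singVal z)) :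
    Summable fun i => ⟪v i, z (v i)⟫_ℂ := by
  choose G hGfd hGrk hGlt using fun m : ℕ =>
    exists_finrank_le_norm_sub_lt z (2 ^ m) (δ := 4⁻¹ ^ m) (by positivity)
  have hG : Tendsto G atTop (𝓝 z) := by
    rw [tendsto_iff_norm_sub_tendsto_zero]
    refine squeeze_zero (fun _ => norm_nonneg _)
      (fun m => (norm_sub_rev _ _).trans_le (hGlt m).le) ?_
    have hs0 := hs.tendsto_atTop_zero.comp (tendsto_pow_atTop_atTop_of_one_lt one_lt_two)
    simpa using hs0.add (tendsto_pow_atTop_nhds_zero_of_lt_one (r := (4⁻¹ : ℝ))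
      (by norm_num) (by norm_num))
  have hbound := diagSum_le_of_tendsto hv hG
    (summable_finrank_mul_norm_sub_of_dyadic hs hGrk hGlt)
  exact (summable_of_sum_le (fun _ => norm_nonneg _) hbound).of_norm

end TraceClass

section Truncation

variable {𝕜 E ι : Type*} [RCLike 𝕜] [NormedAddCommGroup E] [InnerProductSpace 𝕜 E]
  {v : ι → E}

theorem Orthonormal.inner_starProjection_span_image (hv : Orthonormal 𝕜 v) (s : Set ι)
    [(Submodule.span 𝕜 (v '' s)).HasOrthogonalProjection] (i : ι) (w : E) :
    ⟪v i, (Submodule.span 𝕜 (v '' s)).starProjection w⟫_𝕜 =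
      s.indicator (fun j => ⟪v j, w⟫_𝕜) i := by
  by_cases hi : i ∈ s
  · have hvi : v i ∈ Submodule.span 𝕜 (v '' s) :=
      Submodule.subset_span (Set.mem_image_of_mem v hi)
    rw [Set.indicator_of_mem hi, ← Submodule.inner_starProjection_left_eq_right,
      Submodule.starProjection_eq_self_iff.mpr hvi]
  · have hker : Submodule.span 𝕜 (v '' s) ≤ LinearMap.ker (innerₛₗ 𝕜 (v i)) := by
      rw [Submodule.span_le]
      rintro _ ⟨j, hj, rfl⟩
      exact hv.2 (ne_of_mem_of_not_mem hj hi).symm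
    rw [Set.indicator_of_notMem hi]
    exact hker (Submodule.starProjection_apply_mem _ w)

theorem Orthonormal.tsum_inner_starProjection_span_image_comp (hv : Orthonormal 𝕜 v)
    (s : Finset ι) [(Submodule.span 𝕜 (v '' s)).HasOrthogonalProjection] (z : E →L[𝕜] E) :
    ∑' i, ⟪v i, ((Submodule.span 𝕜 (v '' s)).starProjection ∘L z) (v i)⟫_𝕜 =
      ∑ i ∈ s, ⟪v i, z (v i)⟫_𝕜 := by
  rw [sum_eq_tsum_indicator]
  congr with i
  rw [ContinuousLinearMap.comp_apply, hv.inner_starProjection_span_image]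
  by_cases hi : i ∈ (s : Set ι) <;> simp [hi]

end Truncation

theorem tendsto_sigmaTop_iff {H : Type*} [NormedAddCommGroup H] [InnerProductSpace ℂ H]
    {S : BanachSymmSeqSpace} {b : HilbertBasis ℕ ℂ H} {α : Type*} {l : Filter α}
    {f : α → {z : H →L[ℂ] H // z ∈ CE S}} {x : {z : H →L[ℂ] H // z ∈ CE S}} :
    Tendsto f l (@nhds _ (sigmaTop S b) x) ↔ ∀ y ∈ KDual S,
      Tendsto (fun a => traceB b ((f a).1 * y)) l (𝓝 (traceB b (x.1 * y))) := by
  rw [sigmaTop, nhds_iInf, tendsto_iInf]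
  simp only [nhds_induced, tendsto_comap_iff, Subtype.forall]
  rfl

theorem finite_rank_weakly_dense_general
    {H : Type*} [NormedAddCommGroup H] [InnerProductSpace ℂ H] [CompleteSpace H]
    (S : BanachSymmSeqSpace)
    (b : HilbertBasis ℕ ℂ H) :
    ∀ (x : H →L[ℂ] H) (hx : x ∈ CE (H := H) S),
      ∃ xseq : ℕ → {z : H →L[ℂ] H // z ∈ CE (H := H) S},
        (∀ n, FiniteDimensional ℂ (LinearMap.range ((xseq n).1 : H →ₗ[ℂ] H))) ∧
        Filter.Tendsto xseq Filter.atTop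
          (@nhds _ (sigmaTop S b)
            (⟨x, hx⟩ : {z : H →L[ℂ] H // z ∈ CE (H := H) S})) := by
  intro x hx
  let K n := Submodule.span ℂ (b '' (Finset.range n : Set ℕ))
  have (n : ℕ) : FiniteDimensional ℂ (K n) :=
    FiniteDimensional.span_of_finite ℂ ((Finset.range n).finite_toSet.image b)
  refine ⟨fun n => ⟨(K n).starProjection ∘L x, comp_mem_CE hx (K n).starProjection_norm_le⟩,
    fun n => ?_, tendsto_sigmaTop_iff.mpr fun y hy => ?_⟩
  · refine Submodule.finiteDimensional_of_le (?_ : _ ≤ K n)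
    rintro _ ⟨w, rfl⟩
    exact (K n).starProjection_apply_mem (x w)
  · have hsum := summable_inner_apply_of_summable_singVal b.orthonormal (hy x hx).2
    refine hsum.hasSum.tendsto_sum_nat.congr fun n => ?_
    exact (b.orthonormal.tsum_inner_starProjection_span_image_comp _ (x * y)).symm

/-- For every `x ∈ C_E` there is a sequence of finite rank operators
converging to `x` in the weak topology `σ(C_E, C_E^×)`. -/
theorem finite_rank_weakly_dense
    {H : Type*} [NormedAddCommGroup H] [InnerProductSpace ℂ H] [CompleteSpace H]
    [TopologicalSpace.SeparableSpace H] (hinf : ¬ FiniteDimensional ℂ H)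
    (S : BanachSymmSeqSpace) (hc0 : S.SubsetC0)
    (b : HilbertBasis ℕ ℂ H) :
    ∀ (x : H →L[ℂ] H) (hx : x ∈ CE (H := H) S),
      ∃ xseq : ℕ → {z : H →L[ℂ] H // z ∈ CE (H := H) S},
        (∀ n, FiniteDimensional ℂ (LinearMap.range ((xseq n).1 : H →ₗ[ℂ] H))) ∧
        Filter.Tendsto xseq Filter.atTop
          (@nhds _ (sigmaTop S b)
            (⟨x, hx⟩ : {z : H →L[ℂ] H // z ∈ CE (H := H) S})) :=
  finite_rank_weakly_dense_general S b
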